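/- Let s ∈ Cl with s·s† = 1, let m_1 = M_h applied to the constant function x ↦ s, let e = Σ_{j=1}^n e_j, and assume a takes only nonnegative values. Then for every m ∈ ℤⁿ the discrete electric and magnetic potentials are recovered from the first quasi-monomial by: a(x_j) = √( B( (1/h)·m_1(x + h e)·s†, e_j ) + 4/(q²h²) ) for each j = 1, …, n, and Φ_h(x) = (h/(8μ))·B( (1/h)·m_1(x + h e)·s†, e ) + (h/(8μ))·B( (1/h)·m_1(x)·s†, e ) + n/(μ·q²·h), where Φ_h(x) = (h/(8μ))·Σ_{j=1}^{n}( a(x_j)² + a(x_j − h)² ). (This makes Proposition 3.2 precise, with the constants fixed so that the identities hold.) -/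

import Mathlib

open CliffordAlgebra

noncomputable section

/-- The quadratic form `Q(v) = -‖v‖²` on `ℝⁿ`. -/
abbrev Qf (n : ℕ) : QuadraticForm ℝ (Fin n → ℝ) :=
  QuadraticMap.weightedSumSquares ℝ (fun _ : Fin n => (-1 : ℝ))

/-- The Clifford algebra `Cl_{0,n}`. -/
abbrev Cl (n : ℕ) := CliffordAlgebra (Qf n)

/-- The generators `e_j` of `Cl_{0,n}`. -/
def e (n : ℕ) (j : Fin n) : Cl n := ι (Qf n) (Pi.single j 1)

/-- The conjugation `u ↦ u†`: reversal composed with grade involution. -/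
def dag {n : ℕ} (u : Cl n) : Cl n := reverse (involute u)

/-- Lattice functions `ℤⁿ → Cl`. The lattice point is `x = h·m`. -/
abbrev LF (n : ℕ) := (Fin n → ℤ) → Cl n

/-- Scalar component operator `A^{+j}`. -/
def AplusJ (n : ℕ) (h q μ : ℝ) (a : ℝ → ℝ) (j : Fin n) (f : LF n) : LF n :=
  fun m => Real.sqrt (q * h / (4 * μ)) •
    (a (h * (m j : ℝ)) • f (m + Pi.single j 1) - (2 / (q * h)) • f m)

/-- Scalar component operator `A^{−j}`. -/
def AminusJ (n : ℕ) (h q μ : ℝ) (a : ℝ → ℝ) (j : Fin n) (f : LF n) : LF n :=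
  fun m => Real.sqrt (q * h / (4 * μ)) •
    ((2 / (q * h)) • f m - a (h * (m j : ℝ) - h) • f (m - Pi.single j 1))

/-- The Clifford-vector ladder operator `A⁺`. -/
def Aplus (n : ℕ) (h q μ : ℝ) (a : ℝ → ℝ) (f : LF n) : LF n :=
  fun m => ∑ j, e n j * AplusJ n h q μ a j f m

/-- The Clifford-vector ladder operator `A⁻`. -/
def Aminus (n : ℕ) (h q μ : ℝ) (a : ℝ → ℝ) (f : LF n) : LF n :=
  fun m => ∑ j, e n j * AminusJ n h q μ a j f m

/-- The discrete electric potential `Φ_h`. -/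
def Phi (n : ℕ) (h μ : ℝ) (a : ℝ → ℝ) (m : Fin n → ℤ) : ℝ :=
  (h / (8 * μ)) * ∑ j, ((a (h * (m j : ℝ)))^2 + (a (h * (m j : ℝ) - h))^2)

/-- The discrete electromagnetic Schrödinger operator `L_h`. -/
def Lh (n : ℕ) (h q μ : ℝ) (a : ℝ → ℝ) (f : LF n) : LF n :=
  fun m => (1 / (2 * μ)) • (∑ j, ((2 / (q * h)) • f m
      - a (h * (m j : ℝ)) • f (m + Pi.single j 1)
      - a (h * (m j : ℝ) - h) • f (m - Pi.single j 1)))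
    + (q * Phi n h μ a m) • f m

/-- The forward finite difference Dirac operator `D⁺`. -/
def Dplus (n : ℕ) (h : ℝ) (f : LF n) : LF n :=
  fun m => ∑ j, e n j * ((1 / h) • (f (m + Pi.single j 1) - f m))

/-- The multiplication-type operator `M_h`. -/
def Mh (n : ℕ) (h q : ℝ) (a : ℝ → ℝ) (f : LF n) : LF n :=
  fun m => ∑ j, e n j * ((h * (a (h * (m j : ℝ) - h))^2) • f (m - Pi.single j 1)
      - (4 / (q^2 * h)) • f m)

/-- The vacuum recursion `a(x_j)·φ(x + h e_j) = (2/(qh))·φ(x)`. -/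
def VacuumRec (n : ℕ) (h q : ℝ) (a : ℝ → ℝ) (φ : (Fin n → ℤ) → ℝ) : Prop :=
  ∀ (m : Fin n → ℤ) (j : Fin n),
    a (h * (m j : ℝ)) * φ (m + Pi.single j 1) = (2 / (q * h)) * φ m

/-- The bilinear form `B(u, v) = −(u·v + v·u)/2`. -/
def Bform {n : ℕ} (u v : Cl n) : Cl n := (-(2⁻¹ : ℝ)) • (u * v + v * u)

set_option linter.unnecessarySeqFocus false in
lemma polar_single (n : ℕ) (j k : Fin n) :
    QuadraticMap.polar (Qf n) (Pi.single j 1) (Pi.single k 1) = if j = k then -2 else 0 := by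
  rw [QuadraticMap.polar]
  simp only [QuadraticMap.weightedSumSquares_apply, Pi.add_apply, Pi.single_apply, smul_eq_mul]
  rw [Finset.sum_congr rfl (fun i _ => show
      (-1:ℝ) * (((if i = j then (1:ℝ) else 0) + if i = k then 1 else 0) *
        ((if i = j then (1:ℝ) else 0) + if i = k then 1 else 0))
      = (if i = j then (-1:ℝ) else 0) + (if i = k then (-1:ℝ) else 0)
        + (if i = j then (if i = k then (-2:ℝ) else 0) else 0) from by
    by_cases h1 : i = j <;> by_cases h2 : i = k <;> subst_vars <;> simp_all <;> ring)]
  rw [Finset.sum_add_distrib, Finset.sum_add_distrib]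
  simp [Finset.sum_ite_eq', eq_comm]
  by_cases hjk : j = k <;> simp [hjk] <;> ring

lemma e_anticomm (n : ℕ) (j k : Fin n) :
    e n j * e n k + e n k * e n j = algebraMap ℝ (Cl n) (if j = k then -2 else 0) := by
  rw [e, e, ι_mul_ι_add_swap, polar_single]

lemma Bform_sum_smul (n : ℕ) (c : Fin n → ℝ) (k : Fin n) :
    Bform (∑ j, c j • e n j) (e n k) = algebraMap ℝ (Cl n) (c k) := by
  rw [Bform, Finset.sum_mul, Finset.mul_sum, ← Finset.sum_add_distrib, Finset.smul_sum]
  have : ∀ j, (-(2⁻¹ : ℝ)) • ((c j • e n j) * e n k + e n k * (c j • e n j))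
      = algebraMap ℝ (Cl n) (if j = k then c j else 0) := by
    intro j
    rw [smul_mul_assoc, mul_smul_comm, ← smul_add, e_anticomm, smul_smul, Algebra.smul_def,
      ← map_mul]
    congr 1
    by_cases hjk : j = k <;> simp [hjk] <;> ring
  rw [Finset.sum_congr rfl (fun j _ => this j)]
  rw [← map_sum]
  simp [Finset.sum_ite_eq']

lemma Bform_sum_right (n : ℕ) (u : Cl n) (v : Fin n → Cl n) :
    Bform u (∑ k, v k) = ∑ k, Bform u (v k) := by
  simp only [Bform, Finset.mul_sum, Finset.sum_mul, ← Finset.sum_add_distrib, Finset.smul_sum]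

lemma Mh_const (n : ℕ) (h q : ℝ) (hh : h ≠ 0) (hq : q ≠ 0) (a : ℝ → ℝ) (s : Cl n)
    (hs : s * dag s = 1) (m : Fin n → ℤ) :
    (1 / h) • ((Mh n h q a (fun _ => s)) m * dag s)
      = ∑ j, ((a (h * (m j : ℝ) - h))^2 - 4 / (q^2 * h^2)) • e n j := by
  rw [Mh]
  simp only [Finset.sum_mul, Finset.smul_sum]
  refine Finset.sum_congr rfl fun j _ => ?_
  rw [mul_sub, mul_smul_comm, mul_smul_comm, ← sub_smul, smul_mul_assoc, mul_assoc, hs, mul_one,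
    smul_smul]
  congr 1
  field_simp

/-- Proposition 3.2 made precise: for `s ∈ Cl` with `s·s† = 1`,
`m_1 = M_h s`, `e = Σ_j e_j` and `a` nonnegative, the discrete electric and
magnetic potentials are recovered from the first quasi-monomial:
`a(x_j) = √(B((1/h)·m_1(x+he)·s†, e_j) + 4/(q²h²))` (the scalars `b j` being the
values of that bilinear form), and
`Φ_h(x) = (h/(8μ))·B((1/h)·m_1(x+he)·s†, e) + (h/(8μ))·B((1/h)·m_1(x)·s†, e)
  + n/(μ·q²·h)`. -/
theorem stmt_13 (n : ℕ) (h q μ : ℝ) (hh : 0 < h) (hq : 0 < q) (hμ : 0 < μ)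
    (a : ℝ → ℝ) (ha : ∀ t, 0 ≤ a t)
    (s : Cl n) (hs : s * dag s = 1) (m : Fin n → ℤ)
    (b : Fin n → ℝ)
    (hb : ∀ j : Fin n,
      Bform ((1 / h) • ((Mh n h q a (fun _ => s)) (m + 1) * dag s)) (e n j)
        = algebraMap ℝ (Cl n) (b j)) :
    (∀ j : Fin n, a (h * (m j : ℝ)) = Real.sqrt (b j + 4 / (q^2 * h^2))) ∧
    algebraMap ℝ (Cl n)
        ((h / (8 * μ)) * ∑ j, ((a (h * (m j : ℝ)))^2 + (a (h * (m j : ℝ) - h))^2))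
      = (h / (8 * μ)) •
          Bform ((1 / h) • ((Mh n h q a (fun _ => s)) (m + 1) * dag s)) (∑ j, e n j)
        + (h / (8 * μ)) •
            Bform ((1 / h) • ((Mh n h q a (fun _ => s)) m * dag s)) (∑ j, e n j)
        + algebraMap ℝ (Cl n) (n / (μ * q^2 * h)) := by
  have hh0 : h ≠ 0 := hh.ne'
  have hq0 : q ≠ 0 := hq.ne'
  haveI : Invertible (2 : ℝ) := invertibleOfNonzero two_ne_zero
  haveI : Nontrivial (Cl n) := inferInstance
  have hinj : Function.Injective (algebraMap ℝ (Cl n)) := (algebraMap ℝ (Cl n)).injective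
  -- coefficient shift at m + 1
  have hshift : ∀ j : Fin n, h * (((m + 1) j : ℤ) : ℝ) - h = h * (m j : ℝ) := by
    intro j
    simp [Pi.add_apply]
    ring
  have hM1 : (1 / h) • ((Mh n h q a (fun _ => s)) (m + 1) * dag s)
      = ∑ j, ((a (h * (m j : ℝ)))^2 - 4 / (q^2 * h^2)) • e n j := by
    rw [Mh_const n h q hh0 hq0 a s hs (m + 1)]
    exact Finset.sum_congr rfl fun j _ => by rw [hshift j]
  have hbval : ∀ j : Fin n, b j = (a (h * (m j : ℝ)))^2 - 4 / (q^2 * h^2) := by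
    intro j
    apply hinj
    rw [← hb j, hM1, Bform_sum_smul]
  constructor
  · intro j
    rw [hbval j]
    rw [sub_add_cancel]
    exact (Real.sqrt_sq (ha _)).symm
  · rw [hM1, Mh_const n h q hh0 hq0 a s hs m, Bform_sum_right, Bform_sum_right]
    simp only [Bform_sum_smul, ← map_sum]
    rw [Algebra.smul_def, ← map_mul, Algebra.smul_def, ← map_mul, ← map_add, ← map_add]
    congr 1
    rw [Finset.sum_add_distrib, Finset.sum_sub_distrib, Finset.sum_sub_distrib,
      Finset.sum_const, Finset.card_univ, Fintype.card_fin]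
    field_simp
    have h2 : h ^ 2 * q ^ 2 * h⁻¹ ^ 2 * q⁻¹ ^ 2 = 1 := by field_simp
    linear_combination (8 * (n:ℝ)) * h2
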